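/- arXiv:1602.07368 — 3 statements merged into one kernel-verified Lean document; each statement's English description precedes it below -/
import Mathlib

section
/- Let E be a complete metric space, U ⊆ E an open set, Y a normed space, and f : E → Y a map that is continuous at each point of U. Let z : ℕ → E be an injective sequence such that z(n) ∈ U and f(z(n)) = 0 for all n, and such that every x ∈ U with f(x) = 0 equals z(n) for some n. Assume that the sequence (z(n)) is eventually bounded away from each of its own terms: for each m there exist N and d > 0 such that dist(z(n), z(m)) ≥ d for all n ≥ N. Then (z(n)) is eventually bounded away from each point of U: for each x ∈ U there exist N and d > 0 such that dist(z(n), x) ≥ d for all n ≥ N. -/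
/-- **Lemma 4.2, classical content.** If the zero set of `f` in
an open subset `U` of a complete metric space is countably isolated, with
one-one enumeration `(z n)`, then `(z n)` is eventually bounded away from each
point of `U`. -/
theorem eventually_bounded_away_of_countably_isolated
    {E Y : Type*} [MetricSpace E] [CompleteSpace E]
    [NormedAddCommGroup Y] [NormedSpace ℝ Y]
    (U : Set E) (hU : IsOpen U) (f : E → Y)
    (hf : ∀ x ∈ U, ContinuousAt f x)
    (z : ℕ → E) (hinj : Function.Injective z)
    (hzU : ∀ n, z n ∈ U) (hz0 : ∀ n, f (z n) = 0)
    (henum : ∀ x ∈ U, f x = 0 → ∃ n, x = z n)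
    (hba : ∀ m, ∃ N, ∃ d > 0, ∀ n ≥ N, dist (z n) (z m) ≥ d) :
    ∀ x ∈ U, ∃ N, ∃ d > 0, ∀ n ≥ N, dist (z n) x ≥ d := by
  intro x hx
  by_cases h0 : f x = 0
  · obtain ⟨m, rfl⟩ := henum x hx h0
    exact hba m
  · have hfx : 0 < ‖f x‖ := norm_pos_iff.mpr h0
    have := Metric.continuousAt_iff.mp (hf x hx) ‖f x‖ hfx
    obtain ⟨δ, hδ, hball⟩ := this
    refine ⟨0, δ, hδ, fun n _ => ?_⟩
    by_contra hlt
    push_neg at hlt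
    have := hball hlt
    rw [hz0 n] at this
    simp [dist_eq_norm] at this
end

section
/- Let E be a metric space and let z, w : ℕ → E be injective sequences with the same range. If (z(n)) is eventually bounded away from each of its own terms—for each m there exist N and d > 0 with dist(z(n), z(m)) ≥ d for all n ≥ N—then (w(n)) is eventually bounded away from each of its own terms: for each m there exist N and d > 0 with dist(w(n), w(m)) ≥ d for all n ≥ N. -/
/-- If two injective sequences in a metric space have the same
range and one of them is eventually bounded away from each of its own terms,
then so is the other. -/
theorem eventually_bounded_away_of_sameRange
    {E : Type*} [MetricSpace E] (z w : ℕ → E)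
    (hz : Function.Injective z) (hw : Function.Injective w)
    (hrange : Set.range z = Set.range w)
    (hba : ∀ m, ∃ N, ∃ d > 0, ∀ n ≥ N, dist (z n) (z m) ≥ d) :
    ∀ m, ∃ N, ∃ d > 0, ∀ n ≥ N, dist (w n) (w m) ≥ d := by
  -- choose σ with z (σ n) = w n
  have hmem : ∀ n, ∃ k, z k = w n := by
    intro n
    have : w n ∈ Set.range z := hrange ▸ Set.mem_range_self n
    exact this
  choose σ hσ using hmem
  have hσinj : Function.Injective σ := by
    intro a b h
    apply hw
    rw [← hσ a, ← hσ b, h]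
  intro m
  obtain ⟨N, d, hd, hN⟩ := hba (σ m)
  have hfin : ({n | σ n < N} : Set ℕ).Finite := by
    have : ({n | σ n < N} : Set ℕ) = σ ⁻¹' (Set.Iio N) := rfl
    rw [this]
    exact (Set.finite_Iio N).preimage (hσinj.injOn)
  obtain ⟨M, hM⟩ := hfin.bddAbove
  refine ⟨M + 1, d, hd, fun n hn => ?_⟩
  have hσn : σ n ≥ N := by
    by_contra h
    have : n ≤ M := hM (by simpa using Nat.lt_of_not_le h)
    omega
  have := hN (σ n) hσn
  rwa [hσ n, hσ m] at this
end

section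
/- For t ∈ ℝ and δ > 0 define the spike function s(t, δ, y) = max(0, 1 − |y − t|/δ) for y ∈ ℝ. Let (x_n) be a sequence of real numbers that is eventually bounded away from each point of [0,1]: for each t ∈ [0,1] there exist N and d > 0 such that |x_n − t| ≥ d for all n ≥ N. Let (δ_n) be a sequence with 0 < δ_n ≤ 2^{−n} for each n, and let (a_n) be any sequence of real numbers. Then for each y ∈ [0,1] the series Σ_n a_n · s(x_n, δ_n, y) converges (indeed all but finitely many terms vanish), and the function y ↦ Σ_n a_n · s(x_n, δ_n, y) is continuous at every point of [0,1]. -/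
/-- The spike function `s(t, δ, ·)`: equal to `1` at `t`, vanishing outside
`(t − δ, t + δ)`, and linear on `[t − δ, t]` and `[t, t + δ]`. -/
noncomputable def spike (t δ y : ℝ) : ℝ := max 0 (1 - |y - t| / δ)

lemma spike_eq_zero {t δ y : ℝ} (hδ : 0 < δ) (h : δ ≤ |y - t|) :
    spike t δ y = 0 := by
  unfold spike
  rw [max_eq_left]
  have : (1:ℝ) ≤ |y - t| / δ := (one_le_div hδ).2 h
  linarith

lemma spike_continuous (t δ : ℝ) : Continuous fun y => spike t δ y := by
  unfold spike
  exact continuous_const.max (by continuity)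

lemma spike_key (x : ℕ → ℝ)
    (hx : ∀ t ∈ Set.Icc (0:ℝ) 1, ∃ N, ∃ d > 0, ∀ n ≥ N, |x n - t| ≥ d)
    (δ : ℕ → ℝ) (hδpos : ∀ n, 0 < δ n) (hδle : ∀ n, δ n ≤ (2:ℝ) ^ (-(n:ℤ)))
    {y : ℝ} (hy : y ∈ Set.Icc (0:ℝ) 1) :
    ∃ K, ∃ ε > 0, ∀ z ∈ Metric.ball y ε, ∀ n ≥ K, spike (x n) (δ n) z = 0 := by
  obtain ⟨N, d, hd, hN⟩ := hx y hy
  obtain ⟨M, hM⟩ := exists_pow_lt_of_lt_one (show (0:ℝ) < d/2 by linarith)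
    (show (1:ℝ)/2 < 1 by norm_num)
  refine ⟨max N M, d/2, by linarith, ?_⟩
  intro z hz n hn
  have hzy : |z - y| < d/2 := by simpa [Real.dist_eq] using hz
  have h1 : |x n - y| ≥ d := hN n (le_trans (le_max_left _ _) hn)
  have h2 : (2:ℝ) ^ (-(n:ℤ)) = ((1:ℝ)/2) ^ n := by
    rw [zpow_neg, ← one_div]
    simp [div_pow]
  have h3 : δ n ≤ ((1:ℝ)/2) ^ n := h2 ▸ hδle n
  have h4 : ((1:ℝ)/2) ^ n ≤ ((1:ℝ)/2) ^ M :=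
    pow_le_pow_of_le_one (by norm_num) (by norm_num) (le_trans (le_max_right _ _) hn)
  have h5 : δ n < d/2 := lt_of_le_of_lt (h3.trans h4) hM
  apply spike_eq_zero (hδpos n)
  have : |z - x n| ≥ d/2 := by
    have := abs_sub_abs_le_abs_sub (x n - y) (x n - z)
    have h6 : |(x n - y) - (x n - z)| = |z - y| := by
      rw [show (x n - y) - (x n - z) = z - y by ring]
    rw [abs_sub_comm]
    rw [h6] at this
    linarith
  linarith

/-- **Lemma 5.2, classical content.** If `(x n)` is eventually
bounded away from each point of `[0,1]` and `0 < δ n ≤ 2⁻ⁿ`, then for any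
coefficients `(a n)` and each `y ∈ [0,1]` all but finitely many terms of the
series `Σ a n · s(x n, δ n, y)` vanish (so the series converges), and the sum
function is continuous at each point of `[0,1]`. -/
theorem spike_series_converges_and_continuousOn
    (x : ℕ → ℝ)
    (hx : ∀ t ∈ Set.Icc (0:ℝ) 1, ∃ N, ∃ d > 0, ∀ n ≥ N, |x n - t| ≥ d)
    (δ : ℕ → ℝ) (hδpos : ∀ n, 0 < δ n) (hδle : ∀ n, δ n ≤ (2:ℝ) ^ (-(n:ℤ)))
    (a : ℕ → ℝ) :
    (∀ y ∈ Set.Icc (0:ℝ) 1,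
        {n : ℕ | a n * spike (x n) (δ n) y ≠ 0}.Finite ∧
        Summable (fun n => a n * spike (x n) (δ n) y)) ∧
      ContinuousOn (fun y => ∑' n, a n * spike (x n) (δ n) y)
        (Set.Icc (0:ℝ) 1) := by
  constructor
  · intro y hy
    obtain ⟨K, ε, hε, h⟩ := spike_key x hx δ hδpos hδle hy
    have hzero : ∀ n ∉ Finset.range K, a n * spike (x n) (δ n) y = 0 := by
      intro n hn
      rw [h y (Metric.mem_ball_self hε) n (by simpa using hn), mul_zero]
    constructor
    · apply Set.Finite.subset (Set.finite_Iio K)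
      intro n hn
      by_contra hc
      exact hn (hzero n (by simpa using hc))
    · exact summable_of_ne_finset_zero hzero
  · intro y hy
    obtain ⟨K, ε, hε, h⟩ := spike_key x hx δ hδpos hδle hy
    apply ContinuousAt.continuousWithinAt
    have hcont : ContinuousAt
        (fun z => ∑ n ∈ Finset.range K, a n * spike (x n) (δ n) z) y := by
      apply Continuous.continuousAt
      exact continuous_finset_sum _ fun n _ =>
        continuous_const.mul (spike_continuous (x n) (δ n))
    apply hcont.congr
    filter_upwards [Metric.ball_mem_nhds y hε] with z hz
    exact (tsum_eq_sum fun n hn => by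
      rw [h z hz n (by simpa using hn), mul_zero]).symm
end
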